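/- arXiv:2309.05575 — 2 statements merged into one kernel-verified Lean document; each statement's English description precedes it below -/
import Mathlib

section
/- Let λ₁ ≥ λ₂ ≥ 0, α ∈ [0, 1/2], |γ| ≤ 1. Define for u,v with u²+v²=1: a = λ₁u²+λ₂v², b = (λ₁−λ₂)uv, c = λ₂u²+λ₁v², δ = α(a+c) + γ(1−2α)sgn(b)·b, and m₊ = a + b + c − δ. Then the maximum of m₊ over all such (u,v) equals (1−α)(λ₁+λ₂) + (1/2)(1−γ(1−2α))(λ₁−λ₂), attained at u = v = 1/√2. -/
/-!
Since `sgn(b) · b = |b|` and `a + c = (λ₁ + λ₂)(u² + v²)`, on the unit circle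
`m₊ = (1 - α)(λ₁ + λ₂) + b - κ|b|` with `κ = γ(1 - 2α) ≤ 1`. Hence `m₊ ≤ (1 - α)(λ₁ + λ₂) + (1 - κ)|b|`,
and `|b| = (λ₁ - λ₂)|uv| ≤ (λ₁ - λ₂)/2` by AM-GM, with equality at `u = v = 1/√2`.
-/

/-- The quantity m₊ = a + b + c − δ as a function of the eigenvector entries (u, v). -/
noncomputable def mPlus (l1 l2 α γ u v : ℝ) : ℝ :=
  let a := l1 * u ^ 2 + l2 * v ^ 2
  let b := (l1 - l2) * (u * v)
  let c := l2 * u ^ 2 + l1 * v ^ 2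
  let δ := α * (a + c) + γ * (1 - 2 * α) * Real.sign b * b
  a + b + c - δ

lemma Real.sign_mul_self_eq_abs (x : ℝ) : Real.sign x * x = |x| := by
  rcases lt_trichotomy x 0 with hx | rfl | hx
  · rw [Real.sign_of_neg hx, abs_of_neg hx, neg_one_mul]
  · rw [Real.sign_zero, zero_mul, abs_zero]
  · rw [Real.sign_of_pos hx, abs_of_pos hx, one_mul]

section OrderedRing

variable {R : Type*} [CommRing R] [LinearOrder R] [IsStrictOrderedRing R]

lemma two_mul_abs_mul_le_sq_add_sq (u v : R) : 2 * |u * v| ≤ u ^ 2 + v ^ 2 := by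
  rw [abs_mul, ← mul_assoc, ← sq_abs u, ← sq_abs v]
  exact two_mul_le_add_sq _ _

lemma sub_mul_abs_le_of_abs_le {t k B : R} (hk : k ≤ 1) (ht : |t| ≤ B) :
    t - k * |t| ≤ (1 - k) * B :=
  calc t - k * |t| ≤ (1 - k) * |t| := by linarith [le_abs_self t]
    _ ≤ (1 - k) * B := mul_le_mul_of_nonneg_left ht (sub_nonneg.mpr hk)

end OrderedRing

lemma mul_one_sub_two_mul_le_one {α γ : ℝ} (hα : α ∈ Set.Icc (0 : ℝ) (1 / 2)) (hγ : |γ| ≤ 1) :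
    γ * (1 - 2 * α) ≤ 1 := by
  obtain ⟨hα0, hα2⟩ := hα
  calc γ * (1 - 2 * α) ≤ |γ| * (1 - 2 * α) :=
        mul_le_mul_of_nonneg_right (le_abs_self γ) (by linarith)
    _ ≤ 1 := by nlinarith [abs_nonneg γ]

lemma mPlus_eq (l1 l2 α γ u v : ℝ) :
    mPlus l1 l2 α γ u v = (1 - α) * (l1 + l2) * (u ^ 2 + v ^ 2) + (l1 - l2) * (u * v) -
      γ * (1 - 2 * α) * |(l1 - l2) * (u * v)| := by
  simp only [mPlus]
  rw [mul_assoc (γ * (1 - 2 * α)), Real.sign_mul_self_eq_abs]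
  ring

lemma mPlus_le {l1 l2 α γ u v : ℝ} (h12 : l2 ≤ l1) (hκ : γ * (1 - 2 * α) ≤ 1)
    (huv : u ^ 2 + v ^ 2 = 1) :
    mPlus l1 l2 α γ u v ≤ (1 - α) * (l1 + l2) + (1 / 2) * (1 - γ * (1 - 2 * α)) * (l1 - l2) := by
  have hb : |(l1 - l2) * (u * v)| ≤ (l1 - l2) / 2 := by
    rw [abs_mul, abs_of_nonneg (sub_nonneg.mpr h12)]
    nlinarith [two_mul_abs_mul_le_sq_add_sq u v]
  have := sub_mul_abs_le_of_abs_le hκ hb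
  rw [mPlus_eq, huv]
  linarith

lemma one_div_sqrt_two_sq : (1 / Real.sqrt 2) ^ 2 = 1 / 2 := by
  rw [div_pow, one_pow, Real.sq_sqrt zero_le_two]

lemma mPlus_one_div_sqrt_two (l1 l2 α γ : ℝ) (h12 : l2 ≤ l1) :
    mPlus l1 l2 α γ (1 / Real.sqrt 2) (1 / Real.sqrt 2) =
      (1 - α) * (l1 + l2) + (1 / 2) * (1 - γ * (1 - 2 * α)) * (l1 - l2) := by
  rw [mPlus_eq, ← sq, one_div_sqrt_two_sq, abs_of_nonneg (by linarith)]
  ring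

theorem max_mPlus_general (l1 l2 α γ : ℝ)
    (h12 : l2 ≤ l1)
    (hα : α ∈ Set.Icc (0 : ℝ) (1 / 2)) (hγ : |γ| ≤ 1) :
    IsGreatest {m : ℝ | ∃ u v : ℝ, u ^ 2 + v ^ 2 = 1 ∧ m = mPlus l1 l2 α γ u v}
      ((1 - α) * (l1 + l2) + (1 / 2) * (1 - γ * (1 - 2 * α)) * (l1 - l2)) ∧
    mPlus l1 l2 α γ (1 / Real.sqrt 2) (1 / Real.sqrt 2) =
      (1 - α) * (l1 + l2) + (1 / 2) * (1 - γ * (1 - 2 * α)) * (l1 - l2) := by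
  have hval := mPlus_one_div_sqrt_two l1 l2 α γ h12
  have hunit : (1 / Real.sqrt 2) ^ 2 + (1 / Real.sqrt 2) ^ 2 = (1 : ℝ) := by
    rw [one_div_sqrt_two_sq]; norm_num
  refine ⟨⟨⟨_, _, hunit, hval.symm⟩, ?_⟩, hval⟩
  rintro _ ⟨u, v, huv, rfl⟩
  exact mPlus_le h12 (mul_one_sub_two_mul_le_one hα hγ) huv

theorem max_mPlus (l1 l2 α γ : ℝ)
    (h12 : l2 ≤ l1) (h2 : 0 ≤ l2)
    (hα : α ∈ Set.Icc (0 : ℝ) (1 / 2)) (hγ : |γ| ≤ 1) :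
    IsGreatest {m : ℝ | ∃ u v : ℝ, u ^ 2 + v ^ 2 = 1 ∧ m = mPlus l1 l2 α γ u v}
      ((1 - α) * (l1 + l2) + (1 / 2) * (1 - γ * (1 - 2 * α)) * (l1 - l2)) ∧
    mPlus l1 l2 α γ (1 / Real.sqrt 2) (1 / Real.sqrt 2) =
      (1 - α) * (l1 + l2) + (1 / 2) * (1 - γ * (1 - 2 * α)) * (l1 - l2) :=
  max_mPlus_general l1 l2 α γ h12 hα hγ
end

section
/- Let D ∈ ℝ^{N×N} and τ > 0 with τ·L·ρ(DᵀD) ≤ 2, where ρ denotes the spectral norm, and let Φ: ℝ → ℝ be of the form Φ(s) = φ(s)·s with 0 ≤ φ(s) ≤ L for all s (e.g. Φ(s) = g(s²)s with g: ℝ → (0,1], L = 1). Then the iteration u^{k+1} = u^k − τ Dᵀ Φ(Du^k) (Φ applied componentwise) satisfies the stability estimate ‖u^{k+1}‖₂ ≤ ‖u^k‖₂. -/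
open Matrix

theorem mirrored_kernel_step_stable (N : ℕ) (D : Matrix (Fin N) (Fin N) ℝ)
    (τ L : ℝ) (hτ : 0 < τ) (hL : 0 ≤ L)
    (φ Φ : ℝ → ℝ) (hφ : ∀ s, 0 ≤ φ s ∧ φ s ≤ L) (hΦ : ∀ s, Φ s = φ s * s)
    (hstep : τ * L * ‖Matrix.toEuclideanCLM (𝕜 := ℝ) (Dᵀ * D)‖ ≤ 2) :
    ∀ u : EuclideanSpace ℝ (Fin N),
      ‖u - τ • Matrix.toEuclideanCLM (𝕜 := ℝ) Dᵀ
          ((WithLp.equiv 2 (Fin N → ℝ)).symm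
            (fun i => Φ (Matrix.toEuclideanCLM (𝕜 := ℝ) D u i)))‖ ≤ ‖u‖ := by
  intro u
  set A := Matrix.toEuclideanCLM (𝕜 := ℝ) D with hA
  have hAdj : Matrix.toEuclideanCLM (𝕜 := ℝ) Dᵀ = ContinuousLinearMap.adjoint A := by
    rw [← ContinuousLinearMap.star_eq_adjoint, ← map_star]
    congr 1
  set v : EuclideanSpace ℝ (Fin N) := A u with hv
  set w : EuclideanSpace ℝ (Fin N) :=
    (WithLp.equiv 2 (Fin N → ℝ)).symm (fun i => Φ (A u i)) with hw
  have hwi : ∀ i, w i = φ (v i) * v i := by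
    intro i; simp [hw, hΦ, hv]
  -- norm of Dᵀ*D equals ‖A‖^2
  have hnorm : ‖Matrix.toEuclideanCLM (𝕜 := ℝ) (Dᵀ * D)‖ = ‖A‖ * ‖A‖ := by
    rw [_root_.map_mul, hAdj, ← hA, ← ContinuousLinearMap.norm_adjoint_comp_self A]
    rfl
  -- S = ⟪v, w⟫ = ∑ φ(vᵢ) vᵢ²
  set S : ℝ := ∑ i, φ (v i) * (v i) ^ 2 with hS
  have hS0 : 0 ≤ S := Finset.sum_nonneg fun i _ =>
    mul_nonneg (hφ (v i)).1 (sq_nonneg _)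
  have hinner : (inner ℝ v w : ℝ) = S := by
    rw [PiLp.inner_apply, hS]
    congr 1; funext i
    simp [hwi i, RCLike.inner_apply]
    ring
  -- ‖w‖² ≤ L * S
  have hwnorm : ‖w‖ ^ 2 ≤ L * S := by
    rw [← real_inner_self_eq_norm_sq, PiLp.inner_apply, hS, Finset.mul_sum]
    apply Finset.sum_le_sum
    intro i _
    have h1 := (hφ (v i)).1
    have h2 := (hφ (v i)).2
    simp only [hwi i, RCLike.inner_apply, conj_trivial]
    have : φ (v i) * v i * (φ (v i) * v i) = (φ (v i) * φ (v i)) * v i ^ 2 := by ring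
    rw [this]
    have : L * (φ (v i) * v i ^ 2) = (L * φ (v i)) * v i ^ 2 := by ring
    rw [this]
    nlinarith [mul_le_mul_of_nonneg_right (mul_le_mul_of_nonneg_left h2 h1) (sq_nonneg (v i))]
  -- square expansion
  have key : ‖u - τ • Matrix.toEuclideanCLM (𝕜 := ℝ) Dᵀ w‖ ^ 2 ≤ ‖u‖ ^ 2 := by
    rw [hAdj, norm_sub_sq_real, real_inner_smul_right,
      ContinuousLinearMap.adjoint_inner_right, ← hv, hinner, norm_smul]
    have hBw : ‖ContinuousLinearMap.adjoint A w‖ ≤ ‖A‖ * ‖w‖ := by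
      calc ‖ContinuousLinearMap.adjoint A w‖ ≤ ‖ContinuousLinearMap.adjoint A‖ * ‖w‖ :=
            ContinuousLinearMap.le_opNorm _ _
        _ = ‖A‖ * ‖w‖ := by rw [LinearIsometryEquiv.norm_map ContinuousLinearMap.adjoint A]
    have hsq : (‖τ‖ * ‖ContinuousLinearMap.adjoint A w‖) ^ 2 ≤ τ ^ 2 * (‖A‖ * ‖A‖) * ‖w‖ ^ 2 := by
      have h1 : ‖τ‖ = τ := abs_of_pos hτ
      rw [h1]
      have := mul_le_mul_of_nonneg_left hBw hτ.le
      calc (τ * ‖ContinuousLinearMap.adjoint A w‖) ^ 2 ≤ (τ * (‖A‖ * ‖w‖)) ^ 2 := by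
            apply pow_le_pow_left₀ (by positivity) (by nlinarith [norm_nonneg (ContinuousLinearMap.adjoint A w)])
        _ = τ ^ 2 * (‖A‖ * ‖A‖) * ‖w‖ ^ 2 := by ring
    have hfin : τ ^ 2 * (‖A‖ * ‖A‖) * ‖w‖ ^ 2 ≤ 2 * τ * S := by
      have h1 : τ * L * (‖A‖ * ‖A‖) ≤ 2 := by rw [← hnorm]; exact hstep
      calc τ ^ 2 * (‖A‖ * ‖A‖) * ‖w‖ ^ 2 ≤ τ ^ 2 * (‖A‖ * ‖A‖) * (L * S) := by
            apply mul_le_mul_of_nonneg_left hwnorm (by positivity)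
        _ = (τ * L * (‖A‖ * ‖A‖)) * (τ * S) := by ring
        _ ≤ 2 * (τ * S) := mul_le_mul_of_nonneg_right h1 (by positivity)
        _ = 2 * τ * S := by ring
    linarith [hsq, hfin]
  calc ‖u - τ • Matrix.toEuclideanCLM (𝕜 := ℝ) Dᵀ w‖
      = Real.sqrt (‖u - τ • Matrix.toEuclideanCLM (𝕜 := ℝ) Dᵀ w‖ ^ 2) := by
        rw [Real.sqrt_sq (norm_nonneg _)]
    _ ≤ Real.sqrt (‖u‖ ^ 2) := Real.sqrt_le_sqrt key
    _ = ‖u‖ := Real.sqrt_sq (norm_nonneg _)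
end
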